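/- Let a > 0 and define, for μ ∈ [0,1], F(μ) = −μ + (1/2)·tanh(aμ/2) + Σ_{l=1}^∞ sinh(aμ)/(cosh(aμ) + cosh(al)) (the series converges for every a > 0 and μ ∈ [0,1]). Then: (i) F(1−μ) = −F(μ) for all μ ∈ [0,1]; (ii) −1 ≤ F(μ) ≤ 1 for all μ ∈ [0,1]; (iii) F(0) = F(1/2) = F(1) = 0. Consequently the 1-periodic extension F_∞(μ) = F(μ − ⌊μ⌋) satisfies −1 ≤ F_∞(μ) ≤ 1 for all real μ and vanishes at every integer and every half-integer. -/
import Mathlib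
open Real Filter Topology

private lemma tanh_mono' {x y : ℝ} (h : x ≤ y) : Real.tanh x ≤ Real.tanh y := by
  rw [Real.tanh_eq_sinh_div_cosh, Real.tanh_eq_sinh_div_cosh,
    div_le_div_iff₀ (Real.cosh_pos x) (Real.cosh_pos y)]
  have h2 : 0 ≤ Real.sinh (y - x) := Real.sinh_nonneg_iff.2 (sub_nonneg.2 h)
  rw [Real.sinh_sub] at h2
  linarith

private lemma tanh_lt_one' (x : ℝ) : Real.tanh x < 1 := by
  rw [Real.tanh_eq_sinh_div_cosh, div_lt_one (Real.cosh_pos x)]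
  have h := Real.cosh_sub_sinh x
  have h2 := Real.exp_pos (-x)
  linarith

private lemma tanh_nonneg' {x : ℝ} (h : 0 ≤ x) : 0 ≤ Real.tanh x := by
  rw [Real.tanh_eq_sinh_div_cosh]
  exact div_nonneg (Real.sinh_nonneg_iff.2 h) (Real.cosh_pos x).le

private lemma tendsto_tanh' : Tendsto Real.tanh atTop (𝓝 1) := by
  have key : ∀ x : ℝ, Real.tanh x = (1 - Real.exp (-(2*x))) / (1 + Real.exp (-(2*x))) := by
    intro x
    have hpos : (0:ℝ) < 1 + Real.exp (-(2*x)) := by positivity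
    rw [Real.tanh_eq_sinh_div_cosh, div_eq_div_iff (ne_of_gt (Real.cosh_pos x)) (ne_of_gt hpos)]
    rw [Real.sinh_eq, Real.cosh_eq]
    have h1 : Real.exp (-(2*x)) = Real.exp (-x) * Real.exp (-x) := by
      rw [← Real.exp_add]; ring_nf
    have h2 : Real.exp x * Real.exp (-x) = 1 := by rw [← Real.exp_add]; simp
    rw [h1]
    linear_combination Real.exp (-x) * h2
  have hexp : Tendsto (fun x : ℝ => Real.exp (-(2*x))) atTop (𝓝 0) := by
    apply Real.tendsto_exp_atBot.comp
    exact tendsto_neg_atTop_atBot.comp (tendsto_id.const_mul_atTop two_pos)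
  have h2 : Tendsto (fun x : ℝ => (1 - Real.exp (-(2*x))) / (1 + Real.exp (-(2*x)))) atTop
      (𝓝 ((1 - 0) / (1 + 0))) :=
    (tendsto_const_nhds.sub hexp).div (tendsto_const_nhds.add hexp) (by norm_num)
  norm_num at h2
  exact h2.congr (fun x => (key x).symm)

private lemma telescope_hasSum (f : ℕ → ℝ) (hmono : ∀ n, f n ≤ f (n+1))
    (hlim : Tendsto f atTop (𝓝 1)) :
    HasSum (fun n => f (n+1) - f n) (1 - f 0) := by
  rw [hasSum_iff_tendsto_nat_of_nonneg (fun n => sub_nonneg.2 (hmono n))]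
  have h : ∀ n : ℕ, ∑ i ∈ Finset.range n, (f (i+1) - f i) = f n - f 0 :=
    fun n => Finset.sum_range_sub f n
  simp only [h]
  exact hlim.sub_const (f 0)

private lemma sinh_div_eq (x y : ℝ) :
    Real.sinh x / (Real.cosh x + Real.cosh y)
      = (Real.tanh ((x+y)/2) - Real.tanh ((y-x)/2)) / 2 := by
  have hx : x = (x+y)/2 - (y-x)/2 := by ring
  have hy : y = (x+y)/2 + (y-x)/2 := by ring
  set u := (x+y)/2 with hu
  set v := (y-x)/2 with hv
  have hnum : Real.sinh x = Real.sinh u * Real.cosh v - Real.cosh u * Real.sinh v := by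
    rw [hx]; exact Real.sinh_sub u v
  have hden : Real.cosh x + Real.cosh y = 2 * (Real.cosh u * Real.cosh v) := by
    rw [hx, hy, Real.cosh_sub, Real.cosh_add]; ring
  rw [hnum, hden, Real.tanh_eq_sinh_div_cosh, Real.tanh_eq_sinh_div_cosh]
  have h1 := (Real.cosh_pos u).ne'
  have h2 := (Real.cosh_pos v).ne'
  rw [div_sub_div _ _ h1 h2, div_div]
  rw [div_eq_div_iff (by positivity) (by positivity)]
  ring

private lemma summable_aux (a : ℝ) (ha : 0 < a) (μ : ℝ) (h0 : 0 ≤ μ) (h1 : μ ≤ 1) :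
    Summable (fun l : ℕ =>
      Real.sinh (a * μ) / (Real.cosh (a * μ) + Real.cosh (a * ((l : ℝ) + 1)))) := by
  have hsinh : 0 ≤ Real.sinh (a * μ) := Real.sinh_nonneg_iff.2 (by positivity)
  refine Summable.of_nonneg_of_le ?_ ?_ ((summable_geometric_of_lt_one (Real.exp_nonneg (-a))
      (Real.exp_lt_one_iff.2 (neg_neg_iff_pos.2 ha))).mul_left (2 * Real.sinh a * Real.exp (-a)))
  · intro l
    exact div_nonneg hsinh (by positivity)
  · intro l
    set t : ℝ := a * ((l : ℝ) + 1) with ht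
    have htpos : 0 < t := by positivity
    have hcosh_ge : Real.exp t / 2 ≤ Real.cosh t := by
      rw [Real.cosh_eq]
      have := (Real.exp_pos (-t)).le
      linarith
    have step1 : Real.sinh (a * μ) / (Real.cosh (a * μ) + Real.cosh t)
        ≤ Real.sinh a / (Real.exp t / 2) := by
      apply div_le_div₀ (Real.sinh_nonneg_iff.2 ha.le)
      · exact Real.sinh_le_sinh.2 (by nlinarith)
      · positivity
      · calc Real.exp t / 2 ≤ Real.cosh t := hcosh_ge
          _ ≤ Real.cosh (a * μ) + Real.cosh t := le_add_of_nonneg_left (Real.cosh_pos _).le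
    have step2 : Real.sinh a / (Real.exp t / 2)
        = (2 * Real.sinh a * Real.exp (-a)) * Real.exp (-a) ^ l := by
      rw [← Real.exp_nat_mul,
        show (2:ℝ) * Real.sinh a * Real.exp (-a) * Real.exp (↑l * -a)
          = 2 * Real.sinh a * (Real.exp (-a) * Real.exp (↑l * -a)) from by ring,
        ← Real.exp_add, show -a + (l:ℝ) * -a = -t from by rw [ht]; ring, Real.exp_neg]
      have hne := (Real.exp_pos t).ne'
      field_simp
    rw [← step2]; exact step1

private lemma pair_hasSum (a : ℝ) (ha : 0 < a) (μ : ℝ) :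
    HasSum (fun l : ℕ =>
      Real.sinh (a * μ) / (Real.cosh (a * μ) + Real.cosh (a * ((l : ℝ) + 1)))
      + Real.sinh (a * (1 - μ)) / (Real.cosh (a * (1 - μ)) + Real.cosh (a * ((l : ℝ) + 1))))
    (((1 - Real.tanh (a * μ / 2)) + (1 - Real.tanh (a * (1 - μ) / 2))) / 2) := by
  set f : ℕ → ℝ := fun n => Real.tanh (a * (μ + (n : ℝ)) / 2) with hfdef
  set g : ℕ → ℝ := fun n => Real.tanh (a * ((n : ℝ) - μ) / 2) with hgdef
  have hcast : Tendsto (fun n : ℕ => (n : ℝ)) atTop atTop := tendsto_natCast_atTop_atTop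
  have hfm : ∀ n : ℕ, f n ≤ f (n + 1) := by
    intro n; apply tanh_mono'; push_cast; nlinarith
  have hgm : ∀ n : ℕ, g (n + 1) ≤ g (n + 1 + 1) := by
    intro n; apply tanh_mono'; push_cast; nlinarith
  have hflim : Tendsto f atTop (𝓝 1) := by
    apply tendsto_tanh'.comp
    exact Tendsto.atTop_div_const two_pos
      (Tendsto.const_mul_atTop ha (tendsto_atTop_add_const_left atTop μ hcast))
  have hglim : Tendsto g atTop (𝓝 1) := by
    apply tendsto_tanh'.comp
    apply Tendsto.atTop_div_const two_pos
    apply Tendsto.const_mul_atTop ha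
    exact tendsto_atTop_add_const_right atTop (-μ) hcast |>.congr (by intro n; ring)
  have hf : HasSum (fun n => f (n + 1) - f n) (1 - f 0) := telescope_hasSum f hfm hflim
  have hg : HasSum (fun n => g (n + 1 + 1) - g (n + 1)) (1 - g 1) :=
    telescope_hasSum (fun n => g (n + 1)) hgm (hglim.comp (tendsto_add_atTop_nat 1))
  have hsum := (hf.add hg).div_const 2
  have hpt : ∀ l : ℕ,
      (f (l + 1) - f l + (g (l + 1 + 1) - g (l + 1))) / 2
        = Real.sinh (a * μ) / (Real.cosh (a * μ) + Real.cosh (a * ((l : ℝ) + 1)))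
          + Real.sinh (a * (1 - μ)) / (Real.cosh (a * (1 - μ)) + Real.cosh (a * ((l : ℝ) + 1))) := by
    intro l
    rw [sinh_div_eq, sinh_div_eq]
    simp only [hfdef, hgdef]
    push_cast
    ring_nf
  have hval : ((1 - f 0) + (1 - g 1)) / 2
      = ((1 - Real.tanh (a * μ / 2)) + (1 - Real.tanh (a * (1 - μ) / 2))) / 2 := by
    simp only [hfdef, hgdef]
    rw [show a * (μ + ((0 : ℕ) : ℝ)) / 2 = a * μ / 2 by push_cast; ring,
      show a * (((1 : ℕ) : ℝ) - μ) / 2 = a * (1 - μ) / 2 by push_cast; ring]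
  rw [← hval, ← funext hpt]
  exact hsum

/-- properties of the deviation `F` of the grand canonical mean particle
number of the 1d XXZ interface from its linear approximation, and of its 1-periodic
extension `F_∞(μ) = F(μ − ⌊μ⌋)`. -/
theorem stmt18 (a : ℝ) (ha : 0 < a) (F : ℝ → ℝ)
    (hF : ∀ μ : ℝ, F μ = -μ + (1/2) * Real.tanh (a * μ / 2) +
        ∑' l : ℕ, Real.sinh (a * μ) / (Real.cosh (a * μ) + Real.cosh (a * ((l : ℝ) + 1)))) :
    (∀ μ ∈ Set.Icc (0 : ℝ) 1,
      Summable (fun l : ℕ =>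
        Real.sinh (a * μ) / (Real.cosh (a * μ) + Real.cosh (a * ((l : ℝ) + 1))))) ∧
    (∀ μ ∈ Set.Icc (0 : ℝ) 1, F (1 - μ) = - F μ) ∧
    (∀ μ ∈ Set.Icc (0 : ℝ) 1, -1 ≤ F μ ∧ F μ ≤ 1) ∧
    (F 0 = 0 ∧ F (1/2) = 0 ∧ F 1 = 0) ∧
    (∀ μ : ℝ, -1 ≤ F (Int.fract μ) ∧ F (Int.fract μ) ≤ 1) ∧
    (∀ k : ℤ, F (Int.fract (k : ℝ)) = 0) ∧
    (∀ k : ℤ, F (Int.fract ((k : ℝ) + 1/2)) = 0) := by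
  have hsum : ∀ μ ∈ Set.Icc (0 : ℝ) 1,
      Summable (fun l : ℕ =>
        Real.sinh (a * μ) / (Real.cosh (a * μ) + Real.cosh (a * ((l : ℝ) + 1)))) :=
    fun μ hμ => summable_aux a ha μ hμ.1 hμ.2
  have hanti : ∀ μ ∈ Set.Icc (0 : ℝ) 1, F (1 - μ) = - F μ := by
    intro μ hμ
    obtain ⟨h0, h1⟩ := hμ
    have hs1 := summable_aux a ha μ h0 h1
    have hs2 := summable_aux a ha (1 - μ) (by linarith) (by linarith)
    have h := (hs1.hasSum.add hs2.hasSum).unique (pair_hasSum a ha μ)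
    rw [hF μ, hF (1 - μ)]
    linarith [h]
  have hlow : ∀ μ ∈ Set.Icc (0 : ℝ) 1, -μ ≤ F μ := by
    intro μ hμ
    obtain ⟨h0, h1⟩ := hμ
    rw [hF μ]
    have htanh := tanh_nonneg' (show (0:ℝ) ≤ a * μ / 2 by positivity)
    have hts : 0 ≤ ∑' l : ℕ,
        Real.sinh (a * μ) / (Real.cosh (a * μ) + Real.cosh (a * ((l : ℝ) + 1))) :=
      tsum_nonneg fun l => div_nonneg (Real.sinh_nonneg_iff.2 (by positivity)) (by positivity)
    linarith
  have hbound : ∀ μ ∈ Set.Icc (0 : ℝ) 1, -1 ≤ F μ ∧ F μ ≤ 1 := by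
    intro μ hμ
    obtain ⟨h0, h1⟩ := hμ
    constructor
    · linarith [hlow μ ⟨h0, h1⟩]
    · have h2 : (1 - μ) ∈ Set.Icc (0 : ℝ) 1 := ⟨by linarith, by linarith⟩
      have := hlow (1 - μ) h2
      have := hanti μ ⟨h0, h1⟩
      linarith
  have hF0 : F 0 = 0 := by
    rw [hF 0]
    simp [Real.tanh_zero, Real.sinh_zero]
  have hF1 : F 1 = 0 := by
    have := hanti 0 ⟨le_refl 0, zero_le_one⟩
    rw [hF0] at this
    simpa using this
  have hFhalf : F (1/2) = 0 := by
    have := hanti (1/2) ⟨by norm_num, by norm_num⟩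
    norm_num at this
    linarith
  refine ⟨hsum, hanti, hbound, ⟨hF0, hFhalf, hF1⟩, ?_, ?_, ?_⟩
  · intro μ
    exact hbound (Int.fract μ) ⟨Int.fract_nonneg μ, (Int.fract_lt_one μ).le⟩
  · intro k
    rw [Int.fract_intCast, hF0]
  · intro k
    rw [Int.fract_intCast_add, Int.fract_eq_self.2 ⟨by norm_num, by norm_num⟩, hFhalf]
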